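/- arXiv:1902.05754 — 6 statements merged into one kernel-verified Lean document; each statement's English description precedes it below -/
import Mathlib

section
/- Let d ≥ 1 and let f : ℝ^d → ℝ be L_f-Lipschitz with C_π := ∫_{ℝ^d} exp(−f(θ)) dθ ∈ (0, ∞). Then for every ρ > 0, the total variation distance between the Gaussian-smoothed density π_ρ and π satisfies (1/2) ∫_{ℝ^d} |π_ρ(θ) − π(θ)| dθ ≤ 1 − D_{−d}(L_f ρ) / D_{−d}(−L_f ρ). -/
/-!
Lipschitz continuity sandwiches the smoothing kernel pointwise:
`e^{-f(θ)} e^{-L‖z-θ‖} ≤ e^{-f(z)} ≤ e^{-f(θ)} e^{L‖z-θ‖}`. Integrating against the Gaussian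
in `z` puts the unnormalised smoothed density between `A e^{-f(θ)}` and `B e^{-f(θ)}`, with
`A`, `B` the integrals of `e^{∓L‖u‖ - ‖u‖²/(2ρ²)}`; hence `π_ρ ≥ (A/B) π`, and two probability
densities with `q ≥ c p` are at total variation distance at most `1 - c`. In polar coordinates
`A` and `B` are the same multiple of `D_{-d}(Lρ)` and `D_{-d}(-Lρ)`.
-/

open MeasureTheory

noncomputable section

/-- ℝ^d with the Euclidean (ℓ²) structure. -/
abbrev En (d : ℕ) := EuclideanSpace ℝ (Fin d)

/-- The parabolic cylinder function
`D_{−d}(z) = (exp(−z²/4)/Γ(d)) ∫₀^∞ exp(−xz − x²/2) x^{d−1} dx`. -/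
noncomputable def pcf (d : ℕ) (z : ℝ) : ℝ :=
  (Real.exp (-z ^ 2 / 4) / Real.Gamma d) *
    ∫ x in Set.Ioi (0 : ℝ), Real.exp (-(x * z) - x ^ 2 / 2) * x ^ (d - 1)

/-- The normalized density `π(θ) = exp(−f(θ))/C_π`. -/
noncomputable def nrmDensity {d : ℕ} (f : En d → ℝ) (θ : En d) : ℝ :=
  Real.exp (-f θ) / ∫ θ' : En d, Real.exp (-f θ')

/-- The normalized Gaussian-smoothed density
`π_ρ(θ) = (1/C_{π_ρ}) ∫ exp(−f(z) − ‖z−θ‖²/(2ρ²)) dz`. -/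
noncomputable def gaussSmoothed {d : ℕ} (f : En d → ℝ) (ρ : ℝ) (θ : En d) : ℝ :=
  (∫ z : En d, Real.exp (-f z - ‖z - θ‖ ^ 2 / (2 * ρ ^ 2))) /
    ∫ θ' : En d, ∫ z : En d, Real.exp (-f z - ‖z - θ'‖ ^ 2 / (2 * ρ ^ 2))

open Set Metric Real

lemma integrableOn_pow_mul_exp_neg_mul_sub_sq_div (n : ℕ) (c : ℝ) {ρ : ℝ} (hρ : 0 < ρ) :
    IntegrableOn (fun y : ℝ => y ^ n * exp (-(c * y) - y ^ 2 / (2 * ρ ^ 2))) (Ioi 0) := by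
  have hgauss : IntegrableOn (fun y : ℝ => y ^ n * exp (-(1 / (4 * ρ ^ 2)) * y ^ 2)) (Ioi 0) := by
    simpa [Real.rpow_natCast] using integrableOn_rpow_mul_exp_neg_mul_sq (s := n)
      (by positivity : 0 < 1 / (4 * ρ ^ 2)) (by linarith [n.cast_nonneg (α := ℝ)])
  refine (hgauss.const_mul (exp (c ^ 2 * ρ ^ 2))).mono' (by fun_prop) ?_
  filter_upwards [ae_restrict_mem measurableSet_Ioi] with y (hy : 0 < y)
  rw [norm_of_nonneg (by positivity), mul_left_comm, ← exp_add]
  gcongr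
  -- completing the square: `-c y ≤ c²ρ² + y²/(4ρ²)`
  have hsq : 0 ≤ (c * ρ + y / (2 * ρ)) ^ 2 := sq_nonneg _
  have : (c * ρ + y / (2 * ρ)) ^ 2 = c ^ 2 * ρ ^ 2 + c * y + y ^ 2 / (4 * ρ ^ 2) := by
    field_simp; ring
  have : y ^ 2 / (2 * ρ ^ 2) = 2 * (y ^ 2 / (4 * ρ ^ 2)) := by ring
  have : -(1 / (4 * ρ ^ 2)) * y ^ 2 = -(y ^ 2 / (4 * ρ ^ 2)) := by ring
  linarith

section Radial

variable {E : Type*} [NormedAddCommGroup E] [NormedSpace ℝ E] [FiniteDimensional ℝ E]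
  [MeasurableSpace E] [BorelSpace E] [Nontrivial E] (μ : Measure E) [μ.IsAddHaarMeasure]

lemma integrable_exp_neg_mul_norm_sub_sq_div (c : ℝ) {ρ : ℝ} (hρ : 0 < ρ) :
    Integrable (fun u : E => exp (-(c * ‖u‖) - ‖u‖ ^ 2 / (2 * ρ ^ 2))) μ :=
  (integrable_fun_norm_addHaar μ (f := fun r => exp (-(c * r) - r ^ 2 / (2 * ρ ^ 2)))).2 <| by
    simpa only [smul_eq_mul] using integrableOn_pow_mul_exp_neg_mul_sub_sq_div _ c hρ

lemma integral_exp_neg_mul_norm_sub_sq_div (c : ℝ) {ρ : ℝ} (hρ : 0 < ρ) :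
    ∫ u, exp (-(c * ‖u‖) - ‖u‖ ^ 2 / (2 * ρ ^ 2)) ∂μ =
      (Module.finrank ℝ E * μ.real (ball 0 1) * ρ ^ Module.finrank ℝ E *
        Gamma (Module.finrank ℝ E) * exp ((c * ρ) ^ 2 / 4)) * pcf (Module.finrank ℝ E) (c * ρ) := by
  set n := Module.finrank ℝ E
  have hn : 0 < n := Module.finrank_pos
  have hGamma : Gamma n ≠ 0 := (Gamma_pos_of_pos (by exact_mod_cast hn)).ne'
  have hpcf : Gamma n * exp ((c * ρ) ^ 2 / 4) * pcf n (c * ρ) =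
      ∫ x in Ioi 0, exp (-(x * (c * ρ)) - x ^ 2 / 2) * x ^ (n - 1) := by
    rw [pcf, neg_div, exp_neg]
    field_simp
  have hscale : ∫ y in Ioi 0, y ^ (n - 1) * exp (-(c * y) - y ^ 2 / (2 * ρ ^ 2)) =
      ρ ^ n * ∫ x in Ioi 0, exp (-(x * (c * ρ)) - x ^ 2 / 2) * x ^ (n - 1) := by
    have := integral_comp_mul_left_Ioi'
      (fun y => y ^ (n - 1) * exp (-(c * y) - y ^ 2 / (2 * ρ ^ 2))) 0 hρ
    rw [mul_zero] at this
    rw [← this, smul_eq_mul, ← integral_const_mul, ← integral_const_mul]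
    refine setIntegral_congr_fun measurableSet_Ioi fun x _ => ?_
    have : (ρ * x) ^ 2 / (2 * ρ ^ 2) = x ^ 2 / 2 := by field_simp
    have hpow : ρ * ρ ^ (n - 1) = ρ ^ n := by rw [← pow_succ', Nat.sub_add_cancel hn]
    rw [this, mul_pow, ← hpow]
    ring_nf
  rw [integral_fun_norm_addHaar μ fun r => exp (-(c * r) - r ^ 2 / (2 * ρ ^ 2))]
  simp only [smul_eq_mul, nsmul_eq_mul]
  rw [hscale, ← hpcf]
  ring

lemma integral_div_integral_neg_eq_pcf_div (c : ℝ) {ρ : ℝ} (hρ : 0 < ρ) :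
    (∫ u, exp (-(c * ‖u‖) - ‖u‖ ^ 2 / (2 * ρ ^ 2)) ∂μ) /
        ∫ u, exp (-(-c * ‖u‖) - ‖u‖ ^ 2 / (2 * ρ ^ 2)) ∂μ =
      pcf (Module.finrank ℝ E) (c * ρ) / pcf (Module.finrank ℝ E) (-(c * ρ)) := by
  have hn : (0 : ℝ) < Module.finrank ℝ E := by exact_mod_cast Module.finrank_pos
  have hball : 0 < μ.real (ball (0 : E) 1) :=
    ENNReal.toReal_pos (measure_ball_pos μ 0 one_pos).ne' measure_ball_lt_top.ne
  rw [integral_exp_neg_mul_norm_sub_sq_div μ c hρ, integral_exp_neg_mul_norm_sub_sq_div μ (-c) hρ,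
    neg_mul, neg_sq]
  exact mul_div_mul_left _ _ (by positivity [Gamma_pos_of_pos hn])

end Radial

lemma continuous_of_abs_sub_le_mul_norm {E : Type*} [SeminormedAddCommGroup E] {f : E → ℝ} {L : ℝ}
    (hLip : ∀ θ η : E, |f θ - f η| ≤ L * ‖θ - η‖) :
    Continuous f :=
  (LipschitzWith.of_dist_le' (K := L) fun θ η => by
    simpa only [Real.dist_eq, dist_eq_norm, Real.norm_eq_abs] using hLip θ η).continuous

lemma integral_exp_neg_sub_sq_div_mem_Icc {E : Type*} [NormedAddCommGroup E] [MeasurableSpace E]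
    [BorelSpace E] (μ : Measure E) [μ.IsAddRightInvariant] {f : E → ℝ} {L ρ : ℝ}
    (hLip : ∀ θ η : E, |f θ - f η| ≤ L * ‖θ - η‖)
    (hint : Integrable (fun u : E => exp (-(-L * ‖u‖) - ‖u‖ ^ 2 / (2 * ρ ^ 2))) μ) (θ : E) :
    ∫ z, exp (-f z - ‖z - θ‖ ^ 2 / (2 * ρ ^ 2)) ∂μ ∈
      Icc ((∫ u, exp (-(L * ‖u‖) - ‖u‖ ^ 2 / (2 * ρ ^ 2)) ∂μ) * exp (-f θ))
        ((∫ u, exp (-(-L * ‖u‖) - ‖u‖ ^ 2 / (2 * ρ ^ 2)) ∂μ) * exp (-f θ)) := by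
  have hf := continuous_of_abs_sub_le_mul_norm hLip
  have hbound (z : E) := abs_le.mp (hLip z θ)
  have hlow (z : E) : exp (-(L * ‖z - θ‖) - ‖z - θ‖ ^ 2 / (2 * ρ ^ 2)) * exp (-f θ) ≤
      exp (-f z - ‖z - θ‖ ^ 2 / (2 * ρ ^ 2)) := by
    rw [← exp_add, exp_le_exp]; linarith [(hbound z).2]
  have hup (z : E) : exp (-f z - ‖z - θ‖ ^ 2 / (2 * ρ ^ 2)) ≤
      exp (-(-L * ‖z - θ‖) - ‖z - θ‖ ^ 2 / (2 * ρ ^ 2)) * exp (-f θ) := by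
    rw [← exp_add, exp_le_exp]; linarith [(hbound z).1]
  have hint_up := (hint.comp_sub_right θ).mul_const (exp (-f θ))
  have hint_kernel : Integrable (fun z => exp (-f z - ‖z - θ‖ ^ 2 / (2 * ρ ^ 2))) μ :=
    hint_up.mono' (by fun_prop : Continuous fun z => exp (-f z - ‖z - θ‖ ^ 2 / (2 * ρ ^ 2))
      ).aestronglyMeasurable (.of_forall fun z => (norm_of_nonneg (exp_pos _).le).trans_le (hup z))
  have hshift (c : ℝ) : ∫ z, exp (-(c * ‖z - θ‖) - ‖z - θ‖ ^ 2 / (2 * ρ ^ 2)) * exp (-f θ) ∂μ =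
      (∫ u, exp (-(c * ‖u‖) - ‖u‖ ^ 2 / (2 * ρ ^ 2)) ∂μ) * exp (-f θ) := by
    rw [integral_mul_const,
      integral_sub_right_eq_self (fun u => exp (-(c * ‖u‖) - ‖u‖ ^ 2 / (2 * ρ ^ 2)))]
  exact ⟨(hshift L).symm.trans_le <| integral_mono_of_nonneg (.of_forall fun _ => by positivity)
      hint_kernel (.of_forall hlow),
    (integral_mono hint_kernel hint_up hup).trans_eq (hshift (-L))⟩

section TotalVariation

variable {α : Type*} [MeasurableSpace α] {μ : Measure α}

lemma half_integral_abs_sub_le_of_mul_le {p q : α → ℝ} {c : ℝ} (hp : Integrable p μ)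
    (hq : Integrable q μ) (hp0 : ∀ x, 0 ≤ p x) (hpq : ∀ x, c * p x ≤ q x)
    (hp1 : ∫ x, p x ∂μ = 1) (hq1 : ∫ x, q x ∂μ = 1) :
    (1 / 2) * ∫ x, |q x - p x| ∂μ ≤ 1 - c := by
  have hc : c ≤ 1 := by
    simpa [integral_const_mul, hp1, hq1] using integral_mono (hp.const_mul c) hq hpq
  have habs (x : α) : |q x - p x| = (q x - p x) + 2 * max (p x - q x) 0 := by
    rcases le_total (q x) (p x) with h | h
    · rw [abs_of_nonpos (sub_nonpos.mpr h), max_eq_left (sub_nonneg.mpr h)]; ring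
    · rw [abs_of_nonneg (sub_nonneg.mpr h), max_eq_right (sub_nonpos.mpr h)]; ring
  have hpos : Integrable (fun x => max (p x - q x) 0) μ := (hp.sub hq).pos_part
  calc (1 / 2) * ∫ x, |q x - p x| ∂μ = ∫ x, max (p x - q x) 0 ∂μ := by
        simp only [habs]
        rw [integral_add (f := fun x => q x - p x) (hq.sub hp) (hpos.const_mul 2),
          integral_sub hq hp, integral_const_mul, hp1, hq1]
        ring
    _ ≤ ∫ x, (1 - c) * p x ∂μ :=
        integral_mono hpos (hp.const_mul _) fun x =>
          max_le (by linarith [hpq x]) (mul_nonneg (sub_nonneg.mpr hc) (hp0 x))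
    _ = 1 - c := by rw [integral_const_mul, hp1, mul_one]

lemma half_integral_abs_div_integral_sub_le {w N : α → ℝ} {a b : ℝ} (hw : Integrable w μ)
    (hw0 : ∀ x, 0 ≤ w x) (hw_pos : 0 < ∫ x, w x ∂μ) (hN : AEStronglyMeasurable N μ) (ha : 0 < a)
    (hN_mem : ∀ x, N x ∈ Icc (a * w x) (b * w x)) :
    (1 / 2) * ∫ x, |N x / ∫ y, N y ∂μ - w x / ∫ y, w y ∂μ| ∂μ ≤ 1 - a / b := by
  have hN0 (x : α) : 0 ≤ N x := (mul_nonneg ha.le (hw0 x)).trans (hN_mem x).1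
  have hNi : Integrable N μ := (hw.const_mul b).mono' hN <| .of_forall fun x => by
    rw [Real.norm_eq_abs, abs_of_nonneg (hN0 x)]; exact (hN_mem x).2
  have hlow : a * ∫ x, w x ∂μ ≤ ∫ x, N x ∂μ := by
    rw [← integral_const_mul]; exact integral_mono (hw.const_mul a) hNi fun x => (hN_mem x).1
  have hup : ∫ x, N x ∂μ ≤ b * ∫ x, w x ∂μ := by
    rw [← integral_const_mul]; exact integral_mono hNi (hw.const_mul b) fun x => (hN_mem x).2
  have hN_pos : 0 < ∫ x, N x ∂μ := (mul_pos ha hw_pos).trans_le hlow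
  have hb : 0 < b := pos_of_mul_pos_left (hN_pos.trans_le hup) hw_pos.le
  refine half_integral_abs_sub_le_of_mul_le (hw.div_const _) (hNi.div_const _)
    (fun x => div_nonneg (hw0 x) hw_pos.le) (fun x => ?_) ?_ ?_
  · rw [div_mul_div_comm, div_le_div_iff₀ (mul_pos hb hw_pos) hN_pos]
    exact mul_le_mul (hN_mem x).1 hup hN_pos.le (hN0 x)
  · rw [integral_div, div_self hw_pos.ne']
  · rw [integral_div, div_self hN_pos.ne']

end TotalVariation

theorem statement6_general {d : ℕ} (hd : 1 ≤ d) (f : En d → ℝ) (L : ℝ)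
    (hLip : ∀ θ η : En d, |f θ - f η| ≤ L * ‖θ - η‖)
    (hint : Integrable (fun θ : En d => Real.exp (-f θ)))
    (ρ : ℝ) (hρ : 0 < ρ) :
    (1 / 2) * ∫ θ : En d, |gaussSmoothed f ρ θ - nrmDensity f θ| ≤
      1 - pcf d (L * ρ) / pcf d (-(L * ρ)) := by
  have : Nontrivial (En d) :=
    Module.nontrivial_of_finrank_pos (by rw [finrank_euclideanSpace_fin]; omega)
  have hf := continuous_of_abs_sub_le_mul_norm hLip
  have hkernel : Continuous fun p : En d × En d =>
      exp (-f p.2 - ‖p.2 - p.1‖ ^ 2 / (2 * ρ ^ 2)) := by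
    fun_prop
  have htv := half_integral_abs_div_integral_sub_le hint (fun _ => (exp_pos _).le)
    (integral_exp_pos hint) hkernel.aestronglyMeasurable.integral_prod_right'
    (integral_exp_pos (integrable_exp_neg_mul_norm_sub_sq_div volume L hρ))
    (integral_exp_neg_sub_sq_div_mem_Icc volume hLip
      (integrable_exp_neg_mul_norm_sub_sq_div volume (-L) hρ))
  rwa [integral_div_integral_neg_eq_pcf_div volume L hρ, finrank_euclideanSpace_fin] at htv

/-- Lipschitz case: for an `L`-Lipschitz potential `f` with `C_π ∈ (0,∞)`, the total variation
distance between the Gaussian-smoothed density `π_ρ` and `π` is at most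
`1 − D_{−d}(Lρ)/D_{−d}(−Lρ)`. -/
theorem statement6 {d : ℕ} (hd : 1 ≤ d) (f : En d → ℝ) (L : ℝ)
    (hLip : ∀ θ η : En d, |f θ - f η| ≤ L * ‖θ - η‖)
    (hint : Integrable (fun θ : En d => Real.exp (-f θ)))
    (hpos : 0 < ∫ θ : En d, Real.exp (-f θ))
    (ρ : ℝ) (hρ : 0 < ρ) :
    (1 / 2) * ∫ θ : En d, |gaussSmoothed f ρ θ - nrmDensity f θ| ≤
      1 - pcf d (L * ρ) / pcf d (-(L * ρ)) :=
  statement6_general hd f L hLip hint ρ hρ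
end
end

section
/- Let d ≥ 1 and let f : ℝ^d → ℝ be convex and continuously differentiable with M_f-Lipschitz gradient, with C_π := ∫_{ℝ^d} exp(−f(θ)) dθ ∈ (0, ∞), and suppose 𝖬_f := ∫_{ℝ^d} ‖∇f(θ)‖₂² π(θ) dθ < ∞ where π := exp(−f)/C_π. Then for every ρ > 0, the total variation distance between the Gaussian-smoothed density π_ρ and π satisfies (1/2) ∫_{ℝ^d} |π_ρ(θ) − π(θ)| dθ ≤ 1 − (1 + 2ρ² M_f)^{−d/2} (1 − ρ⁴ M_f 𝖬_f / (1 + 2ρ² M_f)). -/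
open MeasureTheory

noncomputable section

/-!
If `∇f` is `M`-Lipschitz, the mean value inequality gives
`f(θ - t) ≤ f(θ) - ⟪∇f(θ), t⟫ + M‖t‖²`, so the unnormalized smoothed density
`∫ exp(-f(θ - t) - ‖t‖²/(2ρ²)) dt` is at least `exp(-f(θ))` times a tilted Gaussian integral,
which is at least `(π/(M + 1/(2ρ²)))^{d/2}`. The total mass of the smoothed density is
`C_π (2πρ²)^{d/2}`, the mass of a convolution being the product of the masses. Hence
`π_ρ ≥ κ π` pointwise with `κ = (1 + 2ρ²M)^{-d/2}`, and two probability densities with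
`p ≥ κ q` are at total variation distance at most `1 - κ`, which is at most the claimed bound
since `S ≥ 0`.
-/

open Real
open scoped RealInnerProductSpace Convolution

section InnerProductSpace

variable {E : Type*} [NormedAddCommGroup E] [InnerProductSpace ℝ E]

theorem le_add_inner_gradient_add_mul_norm_sq [CompleteSpace E] {f : E → ℝ} {M : ℝ}
    (hM : 0 ≤ M) (hf : Differentiable ℝ f)
    (hL : ∀ x y, ‖gradient f x - gradient f y‖ ≤ M * ‖x - y‖) (x y : E) :
    f y ≤ f x + ⟪gradient f x, y - x⟫ + M * ‖y - x‖ ^ 2 := by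
  set g := gradient f x
  have hderiv : ∀ z, HasFDerivAt (fun w => f w - ⟪g, w⟫)
      (InnerProductSpace.toDual ℝ E (gradient f z - g)) z := fun z => by
    rw [map_sub]
    exact (hf z).hasGradientAt.hasFDerivAt.sub (innerSL ℝ g).hasFDerivAt
  have hbound : ∀ z ∈ Metric.closedBall x ‖y - x‖,
      ‖InnerProductSpace.toDual ℝ E (gradient f z - g)‖ ≤ M * ‖y - x‖ := fun z hz => by
    rw [LinearIsometryEquiv.norm_map]
    exact (hL z x).trans (mul_le_mul_of_nonneg_left (mem_closedBall_iff_norm.mp hz) hM)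
  have key := (convex_closedBall x ‖y - x‖).norm_image_sub_le_of_norm_hasFDerivWithin_le
    (fun z _ => (hderiv z).hasFDerivWithinAt) hbound (Metric.mem_closedBall_self (norm_nonneg _))
    (mem_closedBall_iff_norm.mpr le_rfl)
  rw [inner_sub_right]
  nlinarith [(abs_le.mp (Real.norm_eq_abs _ ▸ key)).2]

variable [FiniteDimensional ℝ E] [MeasurableSpace E] [BorelSpace E] {b : ℝ}

theorem integrable_rexp_neg_mul_sq_norm (hb : 0 < b) :
    Integrable fun v : E => rexp (-b * ‖v‖ ^ 2) := by
  have h := (GaussianFourier.integrable_cexp_neg_mul_sq_norm_add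
    (show 0 < (b : ℂ).re from hb) 0 (0 : E)).re
  refine h.congr (.of_forall fun v => ?_)
  simp only [zero_mul, add_zero, RCLike.re_to_complex]
  norm_cast

theorem integral_rexp_neg_mul_sq_norm_add_inner (hb : 0 < b) (w : E) :
    ∫ v : E, rexp (-b * ‖v‖ ^ 2 + ⟪w, v⟫) =
      (π / b) ^ (Module.finrank ℝ E / 2 : ℝ) * rexp (‖w‖ ^ 2 / (4 * b)) := by
  have hofReal : ∀ v : E, ((rexp (-b * ‖v‖ ^ 2 + ⟪w, v⟫) : ℝ) : ℂ) =
      Complex.exp (-b * ‖v‖ ^ 2 + 1 * ⟪w, v⟫) := fun v => by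
    push_cast
    ring_nf
  have h := GaussianFourier.integral_cexp_neg_mul_sq_norm_add
    (show 0 < (b : ℂ).re from hb) 1 w
  simp_rw [← hofReal, integral_complex_ofReal] at h
  rw [← Complex.ofReal_inj, h, Complex.ofReal_mul, Complex.ofReal_cpow (by positivity)]
  push_cast
  ring_nf

theorem integral_convolution_gaussian {F : E → ℝ} (hF : Integrable F) (hb : 0 < b) :
    ∫ x, (F ⋆ fun v => rexp (-b * ‖v‖ ^ 2)) x =
      (∫ x, F x) * (π / b) ^ (Module.finrank ℝ E / 2 : ℝ) := by
  rw [integral_convolution _ hF (integrable_rexp_neg_mul_sq_norm hb),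
    GaussianFourier.integral_rexp_neg_mul_sq_norm hb]
  rfl

theorem rpow_mul_exp_le_convolution_gaussian {f : E → ℝ} {M : ℝ} (hM : 0 ≤ M) (hb : 0 < b)
    (hf : Differentiable ℝ f) (hL : ∀ x y, ‖gradient f x - gradient f y‖ ≤ M * ‖x - y‖)
    (hint : Integrable fun x => rexp (-f x)) (x : E) :
    (π / (M + b)) ^ (Module.finrank ℝ E / 2 : ℝ) * rexp (-f x) ≤
      ((fun x => rexp (-f x)) ⋆ fun v => rexp (-b * ‖v‖ ^ 2)) x := by
  set w := gradient f x
  have hpoint : ∀ t, rexp (-f x) * rexp (-(M + b) * ‖t‖ ^ 2 + ⟪w, t⟫) ≤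
      rexp (-f (x - t)) * rexp (-b * ‖t‖ ^ 2) := fun t => by
    have h := le_add_inner_gradient_add_mul_norm_sq hM hf hL x (x - t)
    rw [sub_sub_cancel_left, inner_neg_right, norm_neg] at h
    rw [← Real.exp_add, ← Real.exp_add, Real.exp_le_exp]
    linarith
  have hupper : Integrable fun t => rexp (-f (x - t)) * rexp (-b * ‖t‖ ^ 2) := by
    have := hf.continuous
    refine (hint.comp_sub_left x).mono (by fun_prop) (.of_forall fun t => ?_)
    rw [norm_mul, Real.norm_of_nonneg (exp_pos _).le, Real.norm_of_nonneg (exp_pos _).le]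
    exact mul_le_of_le_one_right (exp_pos _).le
      (exp_le_one_iff.mpr (by nlinarith [sq_nonneg ‖t‖]))
  calc (π / (M + b)) ^ (Module.finrank ℝ E / 2 : ℝ) * rexp (-f x)
      ≤ (π / (M + b)) ^ (Module.finrank ℝ E / 2 : ℝ) * rexp (‖w‖ ^ 2 / (4 * (M + b))) *
          rexp (-f x) := by
        gcongr
        exact le_mul_of_one_le_right (by positivity) (one_le_exp (by positivity))
    _ = ∫ t, rexp (-f x) * rexp (-(M + b) * ‖t‖ ^ 2 + ⟪w, t⟫) := by
      rw [integral_const_mul, integral_rexp_neg_mul_sq_norm_add_inner (by positivity), mul_comm]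
    _ ≤ ∫ t, rexp (-f (x - t)) * rexp (-b * ‖t‖ ^ 2) :=
      integral_mono_of_nonneg (.of_forall fun t => by positivity) hupper (.of_forall hpoint)
    _ = _ := by
      rw [convolution_lsmul_swap]
      simp only [smul_eq_mul]

end InnerProductSpace

theorem integral_abs_sub_le_of_mul_le {α : Type*} [MeasurableSpace α] {μ : Measure α}
    {p q : α → ℝ} {κ : ℝ} (hp : Integrable p μ) (hq : Integrable q μ)
    (hp1 : ∫ x, p x ∂μ = 1) (hq1 : ∫ x, q x ∂μ = 1) (hq0 : ∀ x, 0 ≤ q x) (hκ : κ ≤ 1)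
    (hpq : ∀ x, κ * q x ≤ p x) :
    ∫ x, |p x - q x| ∂μ ≤ 2 * (1 - κ) := by
  have habs : ∀ x, |p x - q x| ≤ p x + (1 - 2 * κ) * q x := fun x => by
    have := hq0 x
    rw [abs_le]
    constructor <;> nlinarith [hpq x]
  calc ∫ x, |p x - q x| ∂μ ≤ ∫ x, p x + (1 - 2 * κ) * q x ∂μ :=
        integral_mono (hp.sub hq).abs (hp.add (hq.const_mul _)) habs
    _ = 2 * (1 - κ) := by
      rw [integral_add hp (hq.const_mul _), integral_const_mul, hp1, hq1]
      ring

section Smoothing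

variable {d : ℕ} {f : En d → ℝ}

theorem nrmDensity_nonneg (f : En d → ℝ) (θ : En d) : 0 ≤ nrmDensity f θ := by
  unfold nrmDensity
  exact div_nonneg (exp_pos _).le (integral_nonneg fun _ => (exp_pos _).le)

theorem integrable_nrmDensity (hint : Integrable fun θ : En d => rexp (-f θ)) :
    Integrable (nrmDensity f) :=
  hint.div_const _

theorem integral_nrmDensity (hint : Integrable fun θ : En d => rexp (-f θ)) :
    ∫ θ, nrmDensity f θ = 1 := by
  unfold nrmDensity
  rw [integral_div]
  exact div_self (integral_exp_pos hint).ne'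

theorem gaussSmoothed_eq_convolution (f : En d → ℝ) (ρ : ℝ) :
    gaussSmoothed f ρ = fun θ =>
      ((fun x => rexp (-f x)) ⋆ fun v => rexp (-(2 * ρ ^ 2)⁻¹ * ‖v‖ ^ 2)) θ /
        ∫ θ', ((fun x => rexp (-f x)) ⋆ fun v => rexp (-(2 * ρ ^ 2)⁻¹ * ‖v‖ ^ 2)) θ' := by
  have hkernel : ∀ θ, ∫ z, rexp (-f z - ‖z - θ‖ ^ 2 / (2 * ρ ^ 2)) =
      ((fun x => rexp (-f x)) ⋆ fun v => rexp (-(2 * ρ ^ 2)⁻¹ * ‖v‖ ^ 2)) θ := fun θ => by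
    rw [convolution_lsmul]
    congr 1 with z
    rw [smul_eq_mul, ← Real.exp_add, norm_sub_rev]
    ring_nf
  funext θ
  simp only [gaussSmoothed, hkernel]

theorem integral_gaussSmoothed (hint : Integrable fun θ : En d => rexp (-f θ)) {ρ : ℝ}
    (hρ : 0 < ρ) : ∫ θ, gaussSmoothed f ρ θ = 1 := by
  rw [gaussSmoothed_eq_convolution, integral_div]
  refine div_self ?_
  rw [integral_convolution_gaussian hint (by positivity)]
  exact (mul_pos (integral_exp_pos hint) (rpow_pos_of_pos (by positivity) _)).ne'

theorem integrable_gaussSmoothed (hint : Integrable fun θ : En d => rexp (-f θ)) {ρ : ℝ}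
    (hρ : 0 < ρ) : Integrable (gaussSmoothed f ρ) := by
  rw [gaussSmoothed_eq_convolution]
  exact (hint.integrable_convolution _
    (integrable_rexp_neg_mul_sq_norm (by positivity))).div_const _

theorem rpow_mul_nrmDensity_le_gaussSmoothed {M ρ : ℝ} (hM : 0 ≤ M) (hρ : 0 < ρ)
    (hf : Differentiable ℝ f) (hL : ∀ x y, ‖gradient f x - gradient f y‖ ≤ M * ‖x - y‖)
    (hint : Integrable fun θ : En d => rexp (-f θ)) (θ : En d) :
    (1 + 2 * ρ ^ 2 * M) ^ (-(d : ℝ) / 2) * nrmDensity f θ ≤ gaussSmoothed f ρ θ := by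
  have hb : 0 < (2 * ρ ^ 2)⁻¹ := by positivity
  have hC := integral_exp_pos hint
  have hκ : (1 + 2 * ρ ^ 2 * M) ^ (-(d : ℝ) / 2) * (π / (2 * ρ ^ 2)⁻¹) ^ (d / 2 : ℝ) =
      (π / (M + (2 * ρ ^ 2)⁻¹)) ^ (d / 2 : ℝ) := by
    rw [neg_div, rpow_neg (by positivity), ← inv_rpow (by positivity),
      ← mul_rpow (by positivity) (by positivity)]
    congr 1
    field_simp
    ring
  have hlow := rpow_mul_exp_le_convolution_gaussian hM hb hf hL hint θ
  rw [finrank_euclideanSpace_fin, ← hκ] at hlow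
  rw [gaussSmoothed_eq_convolution, integral_convolution_gaussian hint hb,
    finrank_euclideanSpace_fin, nrmDensity, le_div_iff₀ (by positivity)]
  calc _ = (1 + 2 * ρ ^ 2 * M) ^ (-(d : ℝ) / 2) * (π / (2 * ρ ^ 2)⁻¹) ^ (d / 2 : ℝ) *
        rexp (-f θ) := by field_simp
    _ ≤ _ := hlow

end Smoothing

theorem statement8_general {d : ℕ} (hd : 1 ≤ d) (f : En d → ℝ) (M : ℝ)
    (hC1 : ContDiff ℝ 1 f)
    (hgradLip : ∀ θ η : En d, ‖gradient f θ - gradient f η‖ ≤ M * ‖θ - η‖)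
    (hint : Integrable (fun θ : En d => Real.exp (-f θ)))
    (S : ℝ) (hS : S = ∫ θ : En d, ‖gradient f θ‖ ^ 2 * nrmDensity f θ)
    (ρ : ℝ) (hρ : 0 < ρ) :
    (1 / 2) * ∫ θ : En d, |gaussSmoothed f ρ θ - nrmDensity f θ| ≤
      1 - (1 + 2 * ρ ^ 2 * M) ^ (-(d : ℝ) / 2) *
        (1 - ρ ^ 4 * M * S / (1 + 2 * ρ ^ 2 * M)) := by
  have hM : 0 ≤ M := by
    have h := hgradLip (EuclideanSpace.single ⟨0, hd⟩ 1) 0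
    rw [sub_zero, PiLp.norm_single, norm_one, mul_one] at h
    exact (norm_nonneg _).trans h
  set κ := (1 + 2 * ρ ^ 2 * M) ^ (-(d : ℝ) / 2)
  have hκ0 : 0 ≤ κ := by positivity
  have hκ1 : κ ≤ 1 := rpow_le_one_of_one_le_of_nonpos (by nlinarith) (by
    rw [neg_div]; exact neg_nonpos.mpr (by positivity))
  have hTV := integral_abs_sub_le_of_mul_le (integrable_gaussSmoothed hint hρ)
    (integrable_nrmDensity hint) (integral_gaussSmoothed hint hρ) (integral_nrmDensity hint)
    (nrmDensity_nonneg f) hκ1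
    (rpow_mul_nrmDensity_le_gaussSmoothed hM hρ (hC1.differentiable one_ne_zero) hgradLip hint)
  have hS0 : 0 ≤ ρ ^ 4 * M * S / (1 + 2 * ρ ^ 2 * M) := by
    have : 0 ≤ S := hS ▸ integral_nonneg fun θ => mul_nonneg (sq_nonneg _) (nrmDensity_nonneg f θ)
    positivity
  nlinarith [mul_nonneg hκ0 hS0]

/-- Convex gradient-Lipschitz case: for a convex, continuously differentiable potential `f`
with `M`-Lipschitz gradient, `C_π ∈ (0,∞)` and `𝖬_f = ∫ ‖∇f‖² π < ∞`, the total variation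
distance between the Gaussian-smoothed density `π_ρ` and `π` is at most
`1 − (1 + 2ρ²M)^{−d/2}(1 − ρ⁴ M 𝖬_f/(1 + 2ρ²M))`. -/
theorem statement8 {d : ℕ} (hd : 1 ≤ d) (f : En d → ℝ) (M : ℝ)
    (hconv : ConvexOn ℝ Set.univ f)
    (hC1 : ContDiff ℝ 1 f)
    (hgradLip : ∀ θ η : En d, ‖gradient f θ - gradient f η‖ ≤ M * ‖θ - η‖)
    (hint : Integrable (fun θ : En d => Real.exp (-f θ)))
    (hpos : 0 < ∫ θ : En d, Real.exp (-f θ))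
    (hmom : Integrable (fun θ : En d => ‖gradient f θ‖ ^ 2 * nrmDensity f θ))
    (S : ℝ) (hS : S = ∫ θ : En d, ‖gradient f θ‖ ^ 2 * nrmDensity f θ)
    (ρ : ℝ) (hρ : 0 < ρ) :
    (1 / 2) * ∫ θ : En d, |gaussSmoothed f ρ θ - nrmDensity f θ| ≤
      1 - (1 + 2 * ρ ^ 2 * M) ^ (-(d : ℝ) / 2) *
        (1 - ρ ^ 4 * M * S / (1 + 2 * ρ ^ 2 * M)) :=
  statement8_general hd f M hC1 hgradLip hint S hS ρ hρ
end
end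

section
/- Let d ≥ 1, J ≥ 1, and for each j ∈ {1,…,J} let f_j : ℝ^d → ℝ be L_{f_j}-Lipschitz and ρ_j > 0, with 0 < ∫_{ℝ^d} exp(−Σ_j f_j(θ)) dθ < ∞. Let π(θ) ∝ exp(−Σ_{j=1}^J f_j(θ)) and let π_ρ(θ) ∝ Π_{j=1}^J ∫_{ℝ^d} exp(−f_j(z_j) − ‖z_j − θ‖₂²/(2ρ_j²)) dz_j be the normalized marginal of the multiply-split model. Then (1/2) ∫_{ℝ^d} |π_ρ(θ) − π(θ)| dθ ≤ 1 − Π_{j=1}^J D_{−d}(L_{f_j} ρ_j) / D_{−d}(−L_{f_j} ρ_j). -/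
/-! Each factor of the split model is a Gaussian smoothing of `exp (-f_j)`. Since `f_j` is
`L_j`-Lipschitz, `-f_j θ - L_j ‖z - θ‖ ≤ -f_j z ≤ -f_j θ + L_j ‖z - θ‖`, so after the substitution
`z = θ + u` the factor lies between `exp (-f_j θ) A_j(L_j)` and `exp (-f_j θ) A_j(-L_j)`, where
`A_j(s) = ∫ exp (-s ‖u‖ - ‖u‖² / (2 ρ_j²)) du`. Hence the unnormalized marginal is squeezed between
`a exp (-Σ f_j)` and `b exp (-Σ f_j)` with `a = Π A_j(L_j)`, `b = Π A_j(-L_j)`, which after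
normalization gives `π_ρ ≥ (a / b) π`; two probability densities with `p ≥ c q` are at total
variation distance at most `1 - c`. Finally, in polar coordinates `A_j(s)` is a constant that does
not depend on the sign of `s` times `exp ((s ρ_j)² / 4) D_{-d}(s ρ_j)`, so `a / b` is the product of
the ratios `D_{-d}(L_j ρ_j) / D_{-d}(-L_j ρ_j)`. -/

open MeasureTheory

noncomputable section

open Real Set

theorem pcf_div_pcf_neg {d : ℕ} (hd : 1 ≤ d) (z : ℝ) :
    pcf d z / pcf d (-z) =
      (∫ x in Ioi (0 : ℝ), exp (-(x * z) - x ^ 2 / 2) * x ^ (d - 1)) /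
        ∫ x in Ioi (0 : ℝ), exp (-(x * -z) - x ^ 2 / 2) * x ^ (d - 1) := by
  have hΓ : 0 < Gamma d := Gamma_pos_of_pos (by exact_mod_cast hd)
  rw [pcf, pcf, neg_sq, mul_div_mul_left _ _ (by positivity)]

theorem lipschitzWith_of_abs_sub_le_mul_norm {E : Type*} [SeminormedAddCommGroup E]
    {f : E → ℝ} {L : ℝ} (hf : ∀ x y, |f x - f y| ≤ L * ‖x - y‖) :
    LipschitzWith L.toNNReal f :=
  .of_dist_le_mul fun x y => by
    rw [Real.dist_eq, dist_eq_norm, Real.coe_toNNReal']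
    exact (hf x y).trans (mul_le_mul_of_nonneg_right (le_max_left _ _) (norm_nonneg _))

section FiniteDimensionalInnerProductSpace

variable {V : Type*} [NormedAddCommGroup V] [InnerProductSpace ℝ V] [FiniteDimensional ℝ V]
  [MeasurableSpace V] [BorelSpace V]

theorem integrable_exp_mul_norm_sub_mul_norm_sq (a : ℝ) {b : ℝ} (hb : 0 < b) :
    Integrable fun u : V => exp (a * ‖u‖ - b * ‖u‖ ^ 2) := by
  have hgauss : Integrable fun u : V => exp (-(b / 2) * ‖u‖ ^ 2) := by
    refine (GaussianFourier.integrable_cexp_neg_mul_sq_norm_add (V := V) (b := (b / 2 : ℂ))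
      (by simpa using half_pos hb) 0 0).norm.congr (.of_forall fun u => ?_)
    simp [Complex.norm_exp, ← Complex.ofReal_pow]
  refine (hgauss.const_mul (exp (a ^ 2 / (2 * b)))).mono' (by fun_prop) (.of_forall fun u => ?_)
  rw [norm_of_nonneg (exp_pos _).le, ← exp_add, exp_le_exp]
  -- complete the square: `a t - b t² ≤ a² / (2b) - (b/2) t²`
  have : a ^ 2 / (2 * b) + -(b / 2) * ‖u‖ ^ 2 - (a * ‖u‖ - b * ‖u‖ ^ 2) =
      (a - b * ‖u‖) ^ 2 / (2 * b) := by
    field_simp; ring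
  nlinarith [div_nonneg (sq_nonneg (a - b * ‖u‖)) (by positivity : (0 : ℝ) ≤ 2 * b)]

variable (V) in
def radialGaussIntegral (ρ s : ℝ) : ℝ :=
  ∫ u : V, exp (-(s * ‖u‖) - ‖u‖ ^ 2 / (2 * ρ ^ 2))

theorem integrable_radialGauss (s : ℝ) {ρ : ℝ} (hρ : ρ ≠ 0) :
    Integrable fun u : V => exp (-(s * ‖u‖) - ‖u‖ ^ 2 / (2 * ρ ^ 2)) := by
  refine (integrable_exp_mul_norm_sub_mul_norm_sq (-s) (b := 1 / (2 * ρ ^ 2))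
    (by positivity)).congr (.of_forall fun u => ?_)
  ring_nf

theorem radialGaussIntegral_pos (s : ℝ) {ρ : ℝ} (hρ : ρ ≠ 0) :
    0 < radialGaussIntegral V ρ s := by
  rw [radialGaussIntegral, integral_pos_iff_support_of_nonneg (fun u => (exp_pos _).le)
    (integrable_radialGauss s hρ)]
  simp [Function.support, (exp_pos _).ne', NeZero.ne]

theorem radialGaussIntegral_eq [Nontrivial V] (s : ℝ) {ρ : ℝ} (hρ : 0 < ρ) :
    radialGaussIntegral V ρ s =
      (Module.finrank ℝ V * volume.real (Metric.ball (0 : V) 1) * ρ ^ Module.finrank ℝ V) *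
        ∫ x in Ioi (0 : ℝ), exp (-(x * (s * ρ)) - x ^ 2 / 2) * x ^ (Module.finrank ℝ V - 1) := by
  set n := Module.finrank ℝ V
  have hn : 0 < n := Module.finrank_pos
  have hpolar := integral_fun_norm_addHaar (volume : Measure V)
    (fun y => exp (-(s * y) - y ^ 2 / (2 * ρ ^ 2)))
  have hsub : ∀ x : ℝ, (ρ * x) ^ (n - 1) • exp (-(s * (ρ * x)) - (ρ * x) ^ 2 / (2 * ρ ^ 2)) =
      ρ ^ (n - 1) * (exp (-(x * (s * ρ)) - x ^ 2 / 2) * x ^ (n - 1)) := fun x => by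
    rw [smul_eq_mul, mul_pow]
    field_simp
  have hscale : ∫ y in Ioi (0 : ℝ), y ^ (n - 1) • exp (-(s * y) - y ^ 2 / (2 * ρ ^ 2)) =
      ρ ^ n * ∫ x in Ioi (0 : ℝ), exp (-(x * (s * ρ)) - x ^ 2 / 2) * x ^ (n - 1) := by
    have := integral_comp_mul_left_Ioi'
      (fun y => y ^ (n - 1) • exp (-(s * y) - y ^ 2 / (2 * ρ ^ 2))) 0 hρ
    rw [mul_zero] at this
    rw [← this]
    simp only [hsub, integral_const_mul, smul_eq_mul]
    rw [← mul_assoc, ← pow_succ', Nat.sub_add_cancel hn]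
  rw [radialGaussIntegral, hpolar, hscale, nsmul_eq_mul, smul_eq_mul]
  ring

theorem radialGaussIntegral_div_neg [Nontrivial V] (s : ℝ) {ρ : ℝ} (hρ : 0 < ρ) :
    radialGaussIntegral V ρ s / radialGaussIntegral V ρ (-s) =
      pcf (Module.finrank ℝ V) (s * ρ) / pcf (Module.finrank ℝ V) (-(s * ρ)) := by
  have hn : 0 < Module.finrank ℝ V := Module.finrank_pos
  have hball : 0 < volume.real (Metric.ball (0 : V) 1) :=
    ENNReal.toReal_pos (Metric.measure_ball_pos volume _ one_pos).ne' measure_ball_lt_top.ne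
  rw [radialGaussIntegral_eq s hρ, radialGaussIntegral_eq (-s) hρ, neg_mul,
    mul_div_mul_left _ _ (by positivity), pcf_div_pcf_neg hn]

def splitMarginal (f : V → ℝ) (ρ : ℝ) (θ : V) : ℝ :=
  ∫ z, exp (-f z - ‖z - θ‖ ^ 2 / (2 * ρ ^ 2))

theorem stronglyMeasurable_splitMarginal {f : V → ℝ} (hf : Continuous f) (ρ : ℝ) :
    StronglyMeasurable (splitMarginal f ρ) :=
  (show Continuous fun p : V × V => exp (-f p.2 - ‖p.2 - p.1‖ ^ 2 / (2 * ρ ^ 2)) by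
    fun_prop).stronglyMeasurable.integral_prod_right'

theorem integral_exp_mul_radialGauss_sub (c s ρ : ℝ) (θ : V) :
    ∫ z, exp c * exp (-(s * ‖z - θ‖) - ‖z - θ‖ ^ 2 / (2 * ρ ^ 2)) =
      exp c * radialGaussIntegral V ρ s := by
  rw [integral_const_mul, radialGaussIntegral,
    integral_sub_right_eq_self (fun u : V => exp (-(s * ‖u‖) - ‖u‖ ^ 2 / (2 * ρ ^ 2))) θ]

section Lipschitz

variable {f : V → ℝ} {L ρ : ℝ}

theorem integrable_exp_neg_sub_norm_sub_sq (hρ : ρ ≠ 0)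
    (hf : ∀ x y, |f x - f y| ≤ L * ‖x - y‖) (θ : V) :
    Integrable fun z => exp (-f z - ‖z - θ‖ ^ 2 / (2 * ρ ^ 2)) := by
  have hfc := (lipschitzWith_of_abs_sub_le_mul_norm hf).continuous
  refine (((integrable_radialGauss (-L) hρ).comp_sub_right θ).const_mul (exp (-f θ))).mono'
    (by fun_prop) (.of_forall fun z => ?_)
  rw [norm_of_nonneg (exp_pos _).le, ← exp_add, exp_le_exp]
  have := (abs_le.1 (hf z θ)).1
  linarith

theorem exp_neg_mul_radialGaussIntegral_le_splitMarginal (hρ : ρ ≠ 0)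
    (hf : ∀ x y, |f x - f y| ≤ L * ‖x - y‖) (θ : V) :
    exp (-f θ) * radialGaussIntegral V ρ L ≤ splitMarginal f ρ θ := by
  rw [← integral_exp_mul_radialGauss_sub]
  refine integral_mono (((integrable_radialGauss L hρ).comp_sub_right θ).const_mul _)
    (integrable_exp_neg_sub_norm_sub_sq hρ hf θ) fun z => ?_
  rw [← exp_add, exp_le_exp]
  have := (abs_le.1 (hf z θ)).2
  linarith

theorem splitMarginal_le_exp_neg_mul_radialGaussIntegral (hρ : ρ ≠ 0)
    (hf : ∀ x y, |f x - f y| ≤ L * ‖x - y‖) (θ : V) :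
    splitMarginal f ρ θ ≤ exp (-f θ) * radialGaussIntegral V ρ (-L) := by
  rw [← integral_exp_mul_radialGauss_sub]
  refine integral_mono (integrable_exp_neg_sub_norm_sub_sq hρ hf θ)
    (((integrable_radialGauss (-L) hρ).comp_sub_right θ).const_mul _) fun z => ?_
  rw [← exp_add, exp_le_exp]
  have := (abs_le.1 (hf z θ)).1
  linarith

end Lipschitz

variable {ι : Type*} [Fintype ι] {f : ι → V → ℝ} {L ρ : ι → ℝ}

theorem exp_neg_sum_mul_prod_radialGaussIntegral_le_prod_splitMarginal (hρ : ∀ j, ρ j ≠ 0)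
    (hf : ∀ j x y, |f j x - f j y| ≤ L j * ‖x - y‖) (θ : V) :
    exp (-∑ j, f j θ) * ∏ j, radialGaussIntegral V (ρ j) (L j) ≤
      ∏ j, splitMarginal (f j) (ρ j) θ := by
  rw [← Finset.sum_neg_distrib, exp_sum, ← Finset.prod_mul_distrib]
  exact Finset.prod_le_prod
    (fun j _ => mul_nonneg (exp_pos _).le (radialGaussIntegral_pos _ (hρ j)).le)
    fun j _ => exp_neg_mul_radialGaussIntegral_le_splitMarginal (hρ j) (hf j) θ

theorem prod_splitMarginal_le_exp_neg_sum_mul_prod_radialGaussIntegral (hρ : ∀ j, ρ j ≠ 0)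
    (hf : ∀ j x y, |f j x - f j y| ≤ L j * ‖x - y‖) (θ : V) :
    ∏ j, splitMarginal (f j) (ρ j) θ ≤
      exp (-∑ j, f j θ) * ∏ j, radialGaussIntegral V (ρ j) (-L j) := by
  rw [← Finset.sum_neg_distrib, exp_sum, ← Finset.prod_mul_distrib]
  exact Finset.prod_le_prod (fun j _ => integral_nonneg fun z => (exp_pos _).le)
    fun j _ => splitMarginal_le_exp_neg_mul_radialGaussIntegral (hρ j) (hf j) θ

end FiniteDimensionalInnerProductSpace

section TotalVariation

variable {α : Type*} [MeasurableSpace α] {μ : Measure α}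

theorem half_integral_abs_sub_le_one_sub {p q : α → ℝ} {c : ℝ} (hp : Integrable p μ)
    (hq : Integrable q μ) (hq0 : 0 ≤ q) (hp1 : ∫ x, p x ∂μ = 1) (hq1 : ∫ x, q x ∂μ = 1)
    (hcqp : ∀ x, c * q x ≤ p x) :
    (1 / 2) * ∫ x, |p x - q x| ∂μ ≤ 1 - c := by
  have hc : c ≤ 1 := by
    simpa [integral_const_mul, hp1, hq1] using integral_mono (hq.const_mul c) hp hcqp
  -- `|p - q| = (p - min p q) + (q - min p q)` and `c q ≤ min p q`
  have hpt : ∀ x, |p x - q x| ≤ (p x - c * q x) + (q x - c * q x) := fun x => by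
    have := hcqp x
    have := mul_le_of_le_one_left (hq0 x) hc
    rw [abs_le]; constructor <;> linarith
  have hcq : Integrable (fun x => c * q x) μ := hq.const_mul c
  have hpc : Integrable (fun x => p x - c * q x) μ := hp.sub hcq
  have hqc : Integrable (fun x => q x - c * q x) μ := hq.sub hcq
  have hsum : ∫ x, (p x - c * q x) + (q x - c * q x) ∂μ = 2 - 2 * c := by
    rw [integral_add hpc hqc, integral_sub hp hcq, integral_sub hq hcq, integral_const_mul, hp1,
      hq1]
    ring
  have : ∫ x, |p x - q x| ∂μ ≤ ∫ x, (p x - c * q x) + (q x - c * q x) ∂μ :=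
    integral_mono_of_nonneg (.of_forall fun x => abs_nonneg _) (hpc.add hqc) (.of_forall hpt)
  linarith

theorem half_integral_abs_normalize_sub_le_of_sandwich {g N : α → ℝ} {a b : ℝ}
    (hg : Integrable g μ) (hg0 : 0 ≤ g) (hZ : 0 < ∫ x, g x ∂μ) (hN : AEStronglyMeasurable N μ)
    (ha : 0 < a) (hlo : ∀ x, g x * a ≤ N x) (hhi : ∀ x, N x ≤ g x * b) :
    (1 / 2) * ∫ x, |N x / (∫ y, N y ∂μ) - g x / (∫ y, g y ∂μ)| ∂μ ≤ 1 - a / b := by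
  have hNint : Integrable N μ := (hg.mul_const b).mono' hN <| .of_forall fun x => by
    rw [norm_of_nonneg ((mul_nonneg (hg0 x) ha.le).trans (hlo x))]
    exact hhi x
  have hDlo : (∫ x, g x ∂μ) * a ≤ ∫ x, N x ∂μ := by
    rw [← integral_mul_const]; exact integral_mono (hg.mul_const a) hNint hlo
  have hDhi : ∫ x, N x ∂μ ≤ (∫ x, g x ∂μ) * b := by
    rw [← integral_mul_const]; exact integral_mono hNint (hg.mul_const b) hhi
  have hD : 0 < ∫ x, N x ∂μ := (mul_pos hZ ha).trans_le hDlo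
  have hb : 0 < b := pos_of_mul_pos_right (hD.trans_le hDhi) hZ.le
  refine half_integral_abs_sub_le_one_sub (hNint.div_const _) (hg.div_const _)
    (fun x => div_nonneg (hg0 x) hZ.le) (by rw [integral_div, div_self hD.ne'])
    (by rw [integral_div, div_self hZ.ne']) fun x => ?_
  rw [div_mul_div_comm, div_le_div_iff₀ (mul_pos hb hZ) hD]
  calc a * g x * ∫ y, N y ∂μ ≤ a * g x * ((∫ y, g y ∂μ) * b) :=
        mul_le_mul_of_nonneg_left hDhi (mul_nonneg ha.le (hg0 x))
    _ ≤ N x * (b * ∫ y, g y ∂μ) := by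
      rw [mul_comm a, mul_comm _ b]
      exact mul_le_mul_of_nonneg_right (hlo x) (mul_pos hb hZ).le

end TotalVariation

theorem statement10_general {d J : ℕ} (hd : 1 ≤ d)
    (f : Fin J → En d → ℝ) (L ρ : Fin J → ℝ) (hρ : ∀ j, 0 < ρ j)
    (hLip : ∀ j, ∀ θ η : En d, |f j θ - f j η| ≤ L j * ‖θ - η‖)
    (hint : Integrable (fun θ : En d => Real.exp (-∑ j, f j θ)))
    (hpos : 0 < ∫ θ : En d, Real.exp (-∑ j, f j θ)) :
    (1 / 2) * ∫ θ : En d,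
        |(∏ j, ∫ z : En d, Real.exp (-f j z - ‖z - θ‖ ^ 2 / (2 * (ρ j) ^ 2))) /
            (∫ θ' : En d, ∏ j, ∫ z : En d,
              Real.exp (-f j z - ‖z - θ'‖ ^ 2 / (2 * (ρ j) ^ 2))) -
          Real.exp (-∑ j, f j θ) / (∫ θ' : En d, Real.exp (-∑ j, f j θ'))| ≤
      1 - ∏ j, pcf d (L j * ρ j) / pcf d (-(L j * ρ j)) := by
  have : Nonempty (Fin d) := ⟨⟨0, hd⟩⟩
  have hratio : ∏ j, pcf d (L j * ρ j) / pcf d (-(L j * ρ j)) =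
      (∏ j, radialGaussIntegral (En d) (ρ j) (L j)) /
        ∏ j, radialGaussIntegral (En d) (ρ j) (-L j) := by
    rw [← Finset.prod_div_distrib]
    refine Finset.prod_congr rfl fun j _ => ?_
    rw [radialGaussIntegral_div_neg (L j) (hρ j), finrank_euclideanSpace_fin]
  have hmeas : AEStronglyMeasurable fun θ : En d => ∏ j, splitMarginal (f j) (ρ j) θ :=
    (Finset.stronglyMeasurable_fun_prod _ fun j _ => stronglyMeasurable_splitMarginal
      (lipschitzWith_of_abs_sub_le_mul_norm (hLip j)).continuous (ρ j)).aestronglyMeasurable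
  rw [hratio]
  exact half_integral_abs_normalize_sub_le_of_sandwich hint (fun θ => (exp_pos _).le) hpos hmeas
    (Finset.prod_pos fun j _ => radialGaussIntegral_pos _ (hρ j).ne')
    (exp_neg_sum_mul_prod_radialGaussIntegral_le_prod_splitMarginal (fun j => (hρ j).ne') hLip)
    (prod_splitMarginal_le_exp_neg_sum_mul_prod_radialGaussIntegral (fun j => (hρ j).ne') hLip)

/-- Multiple splitting: for `J` potentials `f_j`, each `L_j`-Lipschitz, and tolerances
`ρ_j > 0`, the total variation distance between the normalized marginal `π_ρ` of the
multiply-split model and `π ∝ exp(−Σ_j f_j)` is at most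
`1 − Π_j D_{−d}(L_j ρ_j)/D_{−d}(−L_j ρ_j)`. -/
theorem statement10 {d J : ℕ} (hd : 1 ≤ d) (hJ : 1 ≤ J)
    (f : Fin J → En d → ℝ) (L ρ : Fin J → ℝ) (hρ : ∀ j, 0 < ρ j)
    (hLip : ∀ j, ∀ θ η : En d, |f j θ - f j η| ≤ L j * ‖θ - η‖)
    (hint : Integrable (fun θ : En d => Real.exp (-∑ j, f j θ)))
    (hpos : 0 < ∫ θ : En d, Real.exp (-∑ j, f j θ)) :
    (1 / 2) * ∫ θ : En d,
        |(∏ j, ∫ z : En d, Real.exp (-f j z - ‖z - θ‖ ^ 2 / (2 * (ρ j) ^ 2))) /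
            (∫ θ' : En d, ∏ j, ∫ z : En d,
              Real.exp (-f j z - ‖z - θ'‖ ^ 2 / (2 * (ρ j) ^ 2))) -
          Real.exp (-∑ j, f j θ) / (∫ θ' : En d, Real.exp (-∑ j, f j θ'))| ≤
      1 - ∏ j, pcf d (L j * ρ j) / pcf d (-(L j * ρ j)) :=
  statement10_general hd f L ρ hρ hLip hint hpos
end
end

section
/- Let d ≥ 1 and let f : ℝ^d → ℝ be L_f-Lipschitz. For ρ > 0 define the regularized potential f_ρ(θ) := −log ∫_{ℝ^d} exp(−f(z) − ‖z − θ‖₂²/(2ρ²)) dz + (d/2) log(2πρ²). Then for all θ ∈ ℝ^d, log N_ρ − log D_{−d}(−L_f ρ) ≤ f_ρ(θ) − f(θ) ≤ log N_ρ − log D_{−d}(L_f ρ), where N_ρ := 2^{d/2−1} Γ(d/2) / (Γ(d) exp(L_f² ρ²/4)). -/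
open MeasureTheory

noncomputable section

/-!
Substituting `z = θ + w`, the Lipschitz bound `|f (θ + w) - f θ| ≤ L ‖w‖` squeezes
`∫ exp (-f z - ‖z - θ‖² / (2ρ²)) dz` between `exp (-f θ) * J (∓L)`, where
`J s = ∫ exp (s ‖w‖ - ‖w‖² / (2ρ²)) dw`. The integrand of `J s` is radial: in polar coordinates and
after the scaling `r = ρ x`, `J s = d |B₁| ρ^d ∫₀^∞ x^(d-1) exp (s ρ x - x² / 2) dx`, and the last
integral is `Γ(d) exp (s² ρ² / 4) D_{-d}(-s ρ)`. Finally `d |B₁| = 2 π^(d/2) / Γ(d/2)` turns the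
prefactor into `(2πρ²)^(d/2) / N_ρ`, so taking logarithms gives both bounds.
-/

open Real Set

theorem integrableOn_pow_mul_exp_mul_sub_sq_div (n : ℕ) (a : ℝ) {c : ℝ} (hc : 0 < c) :
    IntegrableOn (fun x : ℝ => x ^ n * exp (a * x - x ^ 2 / c)) (Ioi 0) := by
  have hdom : IntegrableOn
      (fun x : ℝ => exp (c * a ^ 2 / 2) * (x ^ (n : ℝ) * exp (-(1 / (2 * c)) * x ^ 2))) (Ioi 0) :=
    (integrableOn_rpow_mul_exp_neg_mul_sq (by positivity)
      (by linarith [n.cast_nonneg (α := ℝ)])).const_mul _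
  refine hdom.mono' (Continuous.aestronglyMeasurable (by fun_prop)) ?_
  filter_upwards [ae_restrict_mem measurableSet_Ioi] with x (hx : 0 < x)
  rw [norm_of_nonneg (by positivity), rpow_natCast, mul_left_comm]
  gcongr
  rw [← exp_add, exp_le_exp]
  have hcomplete : c * a ^ 2 / 2 + -(1 / (2 * c)) * x ^ 2 - (a * x - x ^ 2 / c)
      = (x - c * a) ^ 2 / (2 * c) := by
    field_simp
    ring
  linarith [div_nonneg (sq_nonneg (x - c * a)) (by positivity : (0 : ℝ) ≤ 2 * c)]

theorem integral_pow_mul_exp_mul_sub_sq_div_pos (n : ℕ) (a : ℝ) {c : ℝ} (hc : 0 < c) :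
    0 < ∫ x in Ioi 0, x ^ n * exp (a * x - x ^ 2 / c) := by
  have hpos : ∀ x ∈ Ioi (0 : ℝ), 0 < x ^ n * exp (a * x - x ^ 2 / c) := fun x (hx : 0 < x) => by
    positivity
  have hsupp : Ioi 0 ⊆ Function.support fun x : ℝ => x ^ n * exp (a * x - x ^ 2 / c) :=
    fun x hx => (hpos x hx).ne'
  rw [setIntegral_pos_iff_support_of_nonneg_ae
    (ae_restrict_of_forall_mem measurableSet_Ioi fun x hx => (hpos x hx).le)
    (integrableOn_pow_mul_exp_mul_sub_sq_div n a hc),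
    inter_eq_self_of_subset_right hsupp, volume_Ioi]
  exact ENNReal.zero_lt_top

theorem pcf_eq_integral (d : ℕ) (z : ℝ) :
    pcf d z = exp (-z ^ 2 / 4) / Gamma d *
      ∫ x in Ioi 0, x ^ (d - 1) * exp (-z * x - x ^ 2 / 2) := by
  unfold pcf
  congr 2 with x
  ring_nf

theorem pcf_pos {d : ℕ} (hd : 1 ≤ d) (z : ℝ) : 0 < pcf d z := by
  have := integral_pow_mul_exp_mul_sub_sq_div_pos (d - 1) (-z) two_pos
  have := Gamma_pos_of_pos (Nat.cast_pos.2 hd)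
  rw [pcf_eq_integral]
  positivity

theorem integral_pow_mul_exp_mul_sub_sq_eq_pcf {d : ℕ} (hd : 1 ≤ d) (a : ℝ) :
    ∫ x in Ioi 0, x ^ (d - 1) * exp (a * x - x ^ 2 / 2)
      = Gamma d * exp (a ^ 2 / 4) * pcf d (-a) := by
  have := (Gamma_pos_of_pos (Nat.cast_pos.2 hd)).ne'
  rw [pcf_eq_integral, neg_neg, neg_sq, neg_div, exp_neg]
  field_simp

theorem integral_pow_mul_exp_mul_sub_sq_div_rescale (n : ℕ) (s : ℝ) {ρ : ℝ} (hρ : 0 < ρ) :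
    ∫ y in Ioi 0, y ^ n * exp (s * y - y ^ 2 / (2 * ρ ^ 2))
      = ρ ^ (n + 1) * ∫ x in Ioi 0, x ^ n * exp (s * ρ * x - x ^ 2 / 2) := by
  have hsub := integral_comp_mul_left_Ioi' (fun y => y ^ n * exp (s * y - y ^ 2 / (2 * ρ ^ 2))) 0 hρ
  have hscale : ∀ x : ℝ, (ρ * x) ^ n * exp (s * (ρ * x) - (ρ * x) ^ 2 / (2 * ρ ^ 2))
      = ρ ^ n * (x ^ n * exp (s * ρ * x - x ^ 2 / 2)) := fun x => by
    field_simp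
    ring_nf
  rw [mul_zero] at hsub
  simp only [← hsub, hscale, integral_const_mul, smul_eq_mul]
  ring

theorem natCast_mul_measureReal_ball_zero_one (d : ℕ) :
    d * volume.real (Metric.ball (0 : En d) 1) = 2 * √π ^ d / Gamma (d / 2) := by
  rcases Nat.eq_zero_or_pos d with rfl | hd
  · simp
  have : Nonempty (Fin d) := ⟨⟨0, hd⟩⟩
  rw [measureReal_def, EuclideanSpace.volume_ball, Fintype.card_fin, ENNReal.ofReal_one, one_pow,
    one_mul, ENNReal.toReal_ofReal (by positivity), Gamma_add_one (by positivity)]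
  field_simp

theorem integrable_exp_mul_norm_sub_sq_norm_div (d : ℕ) {ρ : ℝ} (hρ : 0 < ρ) (s : ℝ) :
    Integrable fun z : En d => exp (s * ‖z‖ - ‖z‖ ^ 2 / (2 * ρ ^ 2)) := by
  obtain hE | hE := subsingleton_or_nontrivial (En d)
  · exact Integrable.of_finite
  refine (integrable_fun_norm_addHaar volume (f := fun r => exp (s * r - r ^ 2 / (2 * ρ ^ 2)))).2 ?_
  simpa only [smul_eq_mul] using
    integrableOn_pow_mul_exp_mul_sub_sq_div _ s (by positivity : (0 : ℝ) < 2 * ρ ^ 2)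

theorem integral_exp_mul_norm_sub_sq_norm_div {d : ℕ} (hd : 1 ≤ d) {ρ : ℝ} (hρ : 0 < ρ) (s : ℝ) :
    ∫ z : En d, exp (s * ‖z‖ - ‖z‖ ^ 2 / (2 * ρ ^ 2))
      = (2 * π * ρ ^ 2) ^ ((d : ℝ) / 2) * pcf d (-(s * ρ)) /
        (2 ^ ((d : ℝ) / 2 - 1) * Gamma ((d : ℝ) / 2) / (Gamma d * exp (s ^ 2 * ρ ^ 2 / 4))) := by
  have : Nonempty (Fin d) := ⟨⟨0, hd⟩⟩
  rw [integral_fun_norm_addHaar volume (fun r => exp (s * r - r ^ 2 / (2 * ρ ^ 2))),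
    finrank_euclideanSpace_fin, nsmul_eq_mul, smul_eq_mul, ← mul_assoc,
    natCast_mul_measureReal_ball_zero_one]
  simp only [smul_eq_mul]
  rw [integral_pow_mul_exp_mul_sub_sq_div_rescale _ _ hρ, Nat.sub_add_cancel hd,
    integral_pow_mul_exp_mul_sub_sq_eq_pcf hd, rpow_div_two_eq_sqrt _ (by positivity),
    rpow_natCast, sqrt_mul (by positivity), sqrt_mul zero_le_two, sqrt_sq hρ.le,
    rpow_sub two_pos, rpow_one, rpow_div_two_eq_sqrt _ zero_le_two, rpow_natCast]
  field_simp
  ring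

section LipschitzPotential

variable {E : Type*} [NormedAddCommGroup E] {f : E → ℝ} {L ρ : ℝ}

theorem exp_neg_add_sub_le (hLip : ∀ θ η, |f θ - f η| ≤ L * ‖θ - η‖) (q : ℝ) (θ w : E) :
    exp (-f (w + θ) - q) ≤ exp (-f θ) * exp (L * ‖w‖ - q) := by
  have := (abs_le.1 (hLip (w + θ) θ)).1
  rw [add_sub_cancel_right] at this
  rw [← exp_add, exp_le_exp]
  linarith

theorem le_exp_neg_add_sub (hLip : ∀ θ η, |f θ - f η| ≤ L * ‖θ - η‖) (q : ℝ) (θ w : E) :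
    exp (-f θ) * exp (-L * ‖w‖ - q) ≤ exp (-f (w + θ) - q) := by
  have := (abs_le.1 (hLip (w + θ) θ)).2
  rw [add_sub_cancel_right] at this
  rw [← exp_add, exp_le_exp]
  linarith

variable [MeasurableSpace E] [BorelSpace E] {μ : Measure E}

theorem integrable_exp_neg_add_sub_sq_norm (hLip : ∀ θ η, |f θ - f η| ≤ L * ‖θ - η‖)
    (hJ : Integrable (fun z => exp (L * ‖z‖ - ‖z‖ ^ 2 / (2 * ρ ^ 2))) μ) (θ : E) :
    Integrable (fun w => exp (-f (w + θ) - ‖w‖ ^ 2 / (2 * ρ ^ 2))) μ := by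
  have hf : Continuous f := (LipschitzWith.of_dist_le' fun x y => by
    rw [Real.dist_eq, dist_eq_norm]
    exact hLip x y).continuous
  refine (hJ.const_mul (exp (-f θ))).mono' (Continuous.aestronglyMeasurable (by fun_prop))
    (.of_forall fun w => ?_)
  rw [norm_of_nonneg (exp_pos _).le]
  exact exp_neg_add_sub_le hLip _ θ w

variable [μ.IsAddRightInvariant]

theorem integral_exp_neg_sub_sq_norm_sub_eq (θ : E) :
    ∫ z, exp (-f z - ‖z - θ‖ ^ 2 / (2 * ρ ^ 2)) ∂μ
      = ∫ w, exp (-f (w + θ) - ‖w‖ ^ 2 / (2 * ρ ^ 2)) ∂μ := by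
  simpa only [add_sub_cancel_right] using (integral_add_right_eq_self (μ := μ)
    (fun z => exp (-f z - ‖z - θ‖ ^ 2 / (2 * ρ ^ 2))) θ).symm

theorem integral_exp_neg_sub_sq_norm_sub_le (hLip : ∀ θ η, |f θ - f η| ≤ L * ‖θ - η‖)
    (hJ : Integrable (fun z => exp (L * ‖z‖ - ‖z‖ ^ 2 / (2 * ρ ^ 2))) μ) (θ : E) :
    ∫ z, exp (-f z - ‖z - θ‖ ^ 2 / (2 * ρ ^ 2)) ∂μ
      ≤ exp (-f θ) * ∫ z, exp (L * ‖z‖ - ‖z‖ ^ 2 / (2 * ρ ^ 2)) ∂μ := by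
  rw [integral_exp_neg_sub_sq_norm_sub_eq, ← integral_const_mul]
  exact integral_mono (integrable_exp_neg_add_sub_sq_norm hLip hJ θ) (hJ.const_mul _)
    fun w => exp_neg_add_sub_le hLip _ θ w

theorem le_integral_exp_neg_sub_sq_norm_sub (hLip : ∀ θ η, |f θ - f η| ≤ L * ‖θ - η‖)
    (hJ : Integrable (fun z => exp (L * ‖z‖ - ‖z‖ ^ 2 / (2 * ρ ^ 2))) μ)
    (hJ' : Integrable (fun z => exp (-L * ‖z‖ - ‖z‖ ^ 2 / (2 * ρ ^ 2))) μ) (θ : E) :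
    exp (-f θ) * ∫ z, exp (-L * ‖z‖ - ‖z‖ ^ 2 / (2 * ρ ^ 2)) ∂μ
      ≤ ∫ z, exp (-f z - ‖z - θ‖ ^ 2 / (2 * ρ ^ 2)) ∂μ := by
  rw [integral_exp_neg_sub_sq_norm_sub_eq, ← integral_const_mul]
  exact integral_mono (hJ'.const_mul _) (integrable_exp_neg_add_sub_sq_norm hLip hJ θ)
    fun w => le_exp_neg_add_sub hLip _ θ w

end LipschitzPotential

/-- Uniform bounds on the regularized potential: for an `L`-Lipschitz potential `f` and
`f_ρ(θ) = −log ∫ exp(−f(z) − ‖z−θ‖²/(2ρ²)) dz + (d/2) log(2πρ²)`, one has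
`log N_ρ − log D_{−d}(−Lρ) ≤ f_ρ(θ) − f(θ) ≤ log N_ρ − log D_{−d}(Lρ)` for all `θ`. -/
theorem statement11 {d : ℕ} (hd : 1 ≤ d) (f : En d → ℝ) (L : ℝ)
    (hLip : ∀ θ η : En d, |f θ - f η| ≤ L * ‖θ - η‖)
    (ρ : ℝ) (hρ : 0 < ρ)
    (N : ℝ) (hN : N = 2 ^ ((d : ℝ) / 2 - 1) * Real.Gamma ((d : ℝ) / 2) /
      (Real.Gamma d * Real.exp (L ^ 2 * ρ ^ 2 / 4)))
    (fρ : En d → ℝ)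
    (hfρ : fρ = fun θ => -Real.log (∫ z : En d, Real.exp (-f z - ‖z - θ‖ ^ 2 / (2 * ρ ^ 2))) +
      ((d : ℝ) / 2) * Real.log (2 * Real.pi * ρ ^ 2))
    (θ : En d) :
    Real.log N - Real.log (pcf d (-(L * ρ))) ≤ fρ θ - f θ ∧
      fρ θ - f θ ≤ Real.log N - Real.log (pcf d (L * ρ)) := by
  have hJ := integrable_exp_mul_norm_sub_sq_norm_div d hρ
  have hupper := integral_exp_neg_sub_sq_norm_sub_le hLip (hJ L) θ
  have hlower := le_integral_exp_neg_sub_sq_norm_sub hLip (hJ L) (hJ (-L)) θ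
  rw [integral_exp_mul_norm_sub_sq_norm_div hd hρ, ← hN] at hupper
  rw [integral_exp_mul_norm_sub_sq_norm_div hd hρ, neg_sq, ← hN, neg_mul, neg_neg] at hlower
  have hN0 : 0 < N := by
    rw [hN]
    have := Gamma_pos_of_pos (half_pos (Nat.cast_pos.2 hd))
    have := Gamma_pos_of_pos (Nat.cast_pos.2 hd)
    positivity
  have hlog : ∀ p, 0 < p → log (exp (-f θ) * ((2 * π * ρ ^ 2) ^ ((d : ℝ) / 2) * p / N))
      = -f θ + (d / 2) * log (2 * π * ρ ^ 2) + log p - log N := fun p hp => by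
    rw [log_mul (exp_pos _).ne' (by positivity), log_exp, log_div (by positivity) hN0.ne',
      log_mul (by positivity) hp.ne', log_rpow (by positivity)]
    ring
  have hP := pcf_pos hd (-(L * ρ))
  have hM := pcf_pos hd (L * ρ)
  have hI := (show 0 < exp (-f θ) * ((2 * π * ρ ^ 2) ^ ((d : ℝ) / 2) * pcf d (L * ρ) / N) by
    positivity).trans_le hlower
  subst hfρ
  constructor
  · linarith [log_le_log hI hupper, hlog _ hP]
  · linarith [log_le_log (by positivity) hlower, hlog _ hM]
end
end

section
/- Let d ≥ 1, ρ > 0, and let f : ℝ^d → ℝ be convex and continuously differentiable. Then for every θ ∈ ℝ^d, ∫_{ℝ^d} exp(f(θ) − f(z) − ‖θ − z‖₂²/(2ρ²)) dz ≤ exp(ρ² ‖∇f(θ)‖₂² / 2) · (2πρ²)^{d/2}. -/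
open MeasureTheory

noncomputable section

/-! Convexity bounds `f θ - f z` by `⟪∇f θ, θ - z⟫`. Completing the square, the exponent is then at
most `ρ² ‖∇f θ‖² / 2 - ‖z - (θ - ρ² ∇f θ)‖² / (2ρ²)`, and the remaining Gaussian integrates to
`(2πρ²)^(d/2)`. -/

open scoped RealInnerProductSpace

theorem ConvexOn.add_fderiv_sub_le {E : Type*} [NormedAddCommGroup E] [NormedSpace ℝ E]
    {s : Set E} {f : E → ℝ} {f' : E →L[ℝ] ℝ} {x y : E} (hf : ConvexOn ℝ s f) (hx : x ∈ s)
    (hy : y ∈ s) (hf' : HasFDerivAt f f' x) : f x + f' (y - x) ≤ f y := by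
  set ℓ : ℝ →ᵃ[ℝ] E := AffineMap.lineMap x y
  have hℓ : ∀ t : ℝ, ℓ t = t • (y - x) + x := AffineMap.lineMap_apply_module' x y
  have hℓ' : HasDerivAt ℓ (y - x) 0 := by
    rw [show ⇑ℓ = fun t : ℝ ↦ t • (y - x) + x from funext hℓ]
    simpa using ((hasDerivAt_id (0 : ℝ)).smul_const (y - x)).add_const x
  have hderiv : HasDerivAt (f ∘ ℓ) (f' (y - x)) 0 := by
    refine HasFDerivAt.comp_hasDerivAt (0 : ℝ) ?_ hℓ'
    simpa [hℓ] using hf'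
  have hslope := (hf.comp_affineMap ℓ).le_slope_of_hasDerivAt (x := 0) (y := 1)
    (by simpa [hℓ] using hx) (by simpa [hℓ] using hy) one_pos hderiv
  simp only [slope_def_field, Function.comp_apply, hℓ, zero_smul, one_smul, zero_add,
    sub_add_cancel, sub_zero, div_one] at hslope
  linarith

theorem ConvexOn.add_inner_gradient_sub_le {E : Type*} [NormedAddCommGroup E]
    [InnerProductSpace ℝ E] [CompleteSpace E] {s : Set E} {f : E → ℝ} {g x y : E}
    (hf : ConvexOn ℝ s f) (hx : x ∈ s) (hy : y ∈ s) (hg : HasGradientAt f g x) :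
    f x + ⟪g, y - x⟫ ≤ f y :=
  hf.add_fderiv_sub_le hx hy hg.hasFDerivAt

theorem real_inner_sub_norm_sq_div {E : Type*} [NormedAddCommGroup E] [InnerProductSpace ℝ E]
    (g u : E) {c : ℝ} (hc : c ≠ 0) :
    ⟪g, u⟫ - ‖u‖ ^ 2 / (2 * c) = c * ‖g‖ ^ 2 / 2 - ‖u - c • g‖ ^ 2 / (2 * c) := by
  rw [norm_sub_sq_real, real_inner_smul_right, real_inner_comm, norm_smul, mul_pow,
    Real.norm_eq_abs, sq_abs]
  field_simp
  ring

section Gaussian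

variable {V : Type*} [NormedAddCommGroup V] [InnerProductSpace ℝ V] [FiniteDimensional ℝ V]
  [MeasurableSpace V] [BorelSpace V]

theorem integral_exp_neg_norm_sub_sq_div {ρ : ℝ} (hρ : ρ ≠ 0) (μ : V) :
    ∫ z : V, Real.exp (-‖z - μ‖ ^ 2 / (2 * ρ ^ 2)) =
      (2 * Real.pi * ρ ^ 2) ^ (Module.finrank ℝ V / 2 : ℝ) := by
  have hb : 0 < 1 / (2 * ρ ^ 2) := by positivity
  rw [integral_sub_right_eq_self (fun z : V ↦ Real.exp (-‖z‖ ^ 2 / (2 * ρ ^ 2))) μ]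
  calc ∫ z : V, Real.exp (-‖z‖ ^ 2 / (2 * ρ ^ 2))
      = ∫ z : V, Real.exp (-(1 / (2 * ρ ^ 2)) * ‖z‖ ^ 2) := by congr 1 with z; ring_nf
    _ = _ := by rw [GaussianFourier.integral_rexp_neg_mul_sq_norm hb]; congr 1; field_simp

theorem integrable_exp_neg_norm_sub_sq_div {ρ : ℝ} (hρ : ρ ≠ 0) (μ : V) :
    Integrable fun z : V ↦ Real.exp (-‖z - μ‖ ^ 2 / (2 * ρ ^ 2)) :=
  .of_integral_ne_zero <| by rw [integral_exp_neg_norm_sub_sq_div hρ]; positivity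

end Gaussian

theorem statement16_general {d : ℕ} (ρ : ℝ) (hρ : 0 < ρ) (f : En d → ℝ)
    (hconv : ConvexOn ℝ Set.univ f) (hC1 : ContDiff ℝ 1 f) (θ : En d) :
    (∫ z : En d, Real.exp (f θ - f z - ‖θ - z‖ ^ 2 / (2 * ρ ^ 2))) ≤
      Real.exp (ρ ^ 2 * ‖gradient f θ‖ ^ 2 / 2) * (2 * Real.pi * ρ ^ 2) ^ ((d : ℝ) / 2) := by
  set g := gradient f θ with hg
  set μ := θ - ρ ^ 2 • g with hμ
  have hρ2 : ρ ^ 2 ≠ 0 := by positivity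
  have hpointwise : ∀ z, Real.exp (f θ - f z - ‖θ - z‖ ^ 2 / (2 * ρ ^ 2)) ≤
      Real.exp (ρ ^ 2 * ‖g‖ ^ 2 / 2) * Real.exp (-‖z - μ‖ ^ 2 / (2 * ρ ^ 2)) := by
    intro z
    have hsub : f θ - f z ≤ ⟪g, θ - z⟫ := by
      have := hconv.add_inner_gradient_sub_le (Set.mem_univ θ) (Set.mem_univ z)
        ((hC1.differentiable one_ne_zero) θ).hasGradientAt
      rw [← hg, ← neg_sub θ z, inner_neg_right] at this
      linarith
    have hsq : ⟪g, θ - z⟫ - ‖θ - z‖ ^ 2 / (2 * ρ ^ 2) =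
        ρ ^ 2 * ‖g‖ ^ 2 / 2 - ‖z - μ‖ ^ 2 / (2 * ρ ^ 2) := by
      rw [real_inner_sub_norm_sq_div g (θ - z) hρ2,
        show θ - z - ρ ^ 2 • g = -(z - μ) by rw [hμ]; abel, norm_neg]
    rw [← Real.exp_add]
    gcongr
    rw [neg_div]
    linarith
  calc (∫ z, Real.exp (f θ - f z - ‖θ - z‖ ^ 2 / (2 * ρ ^ 2)))
      ≤ ∫ z, Real.exp (ρ ^ 2 * ‖g‖ ^ 2 / 2) * Real.exp (-‖z - μ‖ ^ 2 / (2 * ρ ^ 2)) :=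
        integral_mono_of_nonneg (.of_forall fun z ↦ (Real.exp_pos _).le)
          ((integrable_exp_neg_norm_sub_sq_div hρ.ne' μ).const_mul _) (.of_forall hpointwise)
    _ = _ := by
        rw [integral_const_mul, integral_exp_neg_norm_sub_sq_div hρ.ne',
          finrank_euclideanSpace_fin]

/-- Upper bound on the smoothing integral for a convex continuously differentiable `f`:
`∫ exp(f(θ) − f(z) − ‖θ−z‖²/(2ρ²)) dz ≤ exp(ρ²‖∇f(θ)‖²/2)(2πρ²)^{d/2}`. -/
theorem statement16 {d : ℕ} (hd : 1 ≤ d) (ρ : ℝ) (hρ : 0 < ρ) (f : En d → ℝ)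
    (hconv : ConvexOn ℝ Set.univ f) (hC1 : ContDiff ℝ 1 f) (θ : En d) :
    (∫ z : En d, Real.exp (f θ - f z - ‖θ - z‖ ^ 2 / (2 * ρ ^ 2))) ≤
      Real.exp (ρ ^ 2 * ‖gradient f θ‖ ^ 2 / 2) * (2 * Real.pi * ρ ^ 2) ^ ((d : ℝ) / 2) :=
  statement16_general ρ hρ f hconv hC1 θ
end
end

section
/- Let d ≥ 1, ρ > 0, and let f : ℝ^d → ℝ be convex and continuously differentiable with M-Lipschitz gradient, M ≥ 0. Then for every θ ∈ ℝ^d, ∫_{ℝ^d} exp(f(θ) − f(z) − ‖θ − z‖₂²/(2ρ²)) dz ≥ exp(ρ² ‖∇f(θ)‖₂² / (2(1 + 2ρ² M))) · (2πρ² / (1 + 2ρ² M))^{d/2}. -/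
open MeasureTheory

noncomputable section

/-!
Write `g = ∇f(θ)` and `u = z - θ`. The descent lemma `f(θ + u) ≤ f(θ) + ⟪g, u⟫ + (M/2)‖u‖²`
bounds the integrand from below by the Gaussian `exp(-⟪g, u⟫ - a‖u‖²)` with
`a = M + 1/(2ρ²)`, whose integral `(π/a)^(d/2) exp(‖g‖²/(4a))` is the claimed bound. Convexity,
`f(θ + u) ≥ f(θ) + ⟪g, u⟫`, bounds the integrand from above by a Gaussian as well, so it is
integrable and the pointwise bound passes to the integral.
-/

open Real
open scoped InnerProductSpace Gradient

section Gaussian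

variable {V : Type*} [NormedAddCommGroup V] [InnerProductSpace ℝ V]

lemma cexp_neg_mul_sq_norm_add_inner (b : ℝ) (w v : V) :
    Complex.exp (-(b : ℂ) * ‖v‖ ^ 2 + 1 * (⟪w, v⟫_ℝ : ℂ)) = rexp (⟪w, v⟫_ℝ - b * ‖v‖ ^ 2) := by
  push_cast
  ring_nf

variable [FiniteDimensional ℝ V] [MeasurableSpace V] [BorelSpace V]

lemma integrable_rexp_inner_sub_mul_sq_norm {b : ℝ} (hb : 0 < b) (w : V) :
    Integrable fun v : V => rexp (⟪w, v⟫_ℝ - b * ‖v‖ ^ 2) := by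
  have h := (GaussianFourier.integrable_cexp_neg_mul_sq_norm_add
    (b := (b : ℂ)) (by simpa using hb) 1 w).re
  simpa only [cexp_neg_mul_sq_norm_add_inner, RCLike.re_to_complex, Complex.ofReal_re] using h

lemma integral_rexp_inner_sub_mul_sq_norm {b : ℝ} (hb : 0 < b) (w : V) :
    ∫ v : V, rexp (⟪w, v⟫_ℝ - b * ‖v‖ ^ 2) =
      (π / b) ^ (Module.finrank ℝ V / 2 : ℝ) * rexp (‖w‖ ^ 2 / (4 * b)) := by
  have h := GaussianFourier.integral_cexp_neg_mul_sq_norm_add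
    (b := (b : ℂ)) (by simpa using hb) 1 w
  simp only [cexp_neg_mul_sq_norm_add_inner, integral_complex_ofReal] at h
  rw [← Complex.ofReal_inj, h, Complex.ofReal_mul, Complex.ofReal_cpow (by positivity),
    Complex.ofReal_exp]
  push_cast
  ring_nf

end Gaussian

section Smooth

variable {E : Type*} [NormedAddCommGroup E] [InnerProductSpace ℝ E] [CompleteSpace E]
  {f : E → ℝ}

lemma hasDerivAt_comp_add_smul {x u : E} {t : ℝ} (hf : DifferentiableAt ℝ f (x + t • u)) :
    HasDerivAt (fun s : ℝ => f (x + s • u)) ⟪∇ f (x + t • u), u⟫_ℝ t := by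
  rw [inner_gradient_left]
  refine hf.hasFDerivAt.comp_hasDerivAt t ?_
  simpa using ((hasDerivAt_id t).smul_const u).const_add x

lemma ConvexOn.add_inner_gradient_le (hconv : ConvexOn ℝ Set.univ f) {x : E}
    (hf : DifferentiableAt ℝ f x) (y : E) : f x + ⟪∇ f x, y - x⟫_ℝ ≤ f y := by
  have hline : ConvexOn ℝ Set.univ fun t : ℝ => f (x + t • (y - x)) := by
    simpa [Function.comp_def, AffineMap.lineMap_apply, add_comm] using
      hconv.comp_affineMap (AffineMap.lineMap x y)
  have hslope := hline.le_slope_of_hasDerivAt (Set.mem_univ 0) (Set.mem_univ 1) one_pos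
    (hasDerivAt_comp_add_smul (by simpa using hf))
  simp only [slope_def_field, zero_smul, add_zero, one_smul, sub_zero, div_one,
    add_sub_cancel] at hslope
  linarith

lemma le_add_inner_gradient_add_sq_norm (hf : Differentiable ℝ f) {M : ℝ}
    (hlip : ∀ x y : E, ‖∇ f x - ∇ f y‖ ≤ M * ‖x - y‖) (x y : E) :
    f y ≤ f x + ⟪∇ f x, y - x⟫_ℝ + M / 2 * ‖y - x‖ ^ 2 := by
  set u := y - x
  let φ : ℝ → ℝ := fun t => f (x + t • u) - t * ⟪∇ f x, u⟫_ℝ - M / 2 * ‖u‖ ^ 2 * t ^ 2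
  have hφ : ∀ t, HasDerivAt φ (⟪∇ f (x + t • u) - ∇ f x, u⟫_ℝ - M * ‖u‖ ^ 2 * t) t := by
    intro t
    have hline := hasDerivAt_comp_add_smul (x := x) (u := u) (hf (x + t • u))
    refine ((hline.sub ((hasDerivAt_id t).mul_const ⟪∇ f x, u⟫_ℝ)).sub
      ((hasDerivAt_pow 2 t).const_mul (M / 2 * ‖u‖ ^ 2))).congr_deriv ?_
    rw [inner_sub_left]
    ring
  have hφ' : ∀ t ∈ interior (Set.Ici (0 : ℝ)),
      ⟪∇ f (x + t • u) - ∇ f x, u⟫_ℝ - M * ‖u‖ ^ 2 * t ≤ 0 := by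
    intro t ht
    rw [interior_Ici, Set.mem_Ioi] at ht
    have hgrad := hlip (x + t • u) x
    rw [add_sub_cancel_left, norm_smul, Real.norm_of_nonneg ht.le] at hgrad
    refine sub_nonpos.2 ?_
    calc ⟪∇ f (x + t • u) - ∇ f x, u⟫_ℝ ≤ ‖∇ f (x + t • u) - ∇ f x‖ * ‖u‖ :=
          real_inner_le_norm _ _
      _ ≤ M * (t * ‖u‖) * ‖u‖ := by gcongr
      _ = M * ‖u‖ ^ 2 * t := by ring
  have hanti := antitoneOn_of_hasDerivWithinAt_nonpos (convex_Ici 0)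
    (fun t _ => (hφ t).continuousAt.continuousWithinAt) (fun t _ => (hφ t).hasDerivWithinAt) hφ'
  have h10 : φ 1 ≤ φ 0 := hanti Set.self_mem_Ici (Set.mem_Ici.2 zero_le_one) zero_le_one
  simp only [φ, u, zero_smul, add_zero, one_smul, add_sub_cancel] at h10
  linarith

end Smooth

section SmoothingIntegral

variable {E : Type*} [NormedAddCommGroup E] [InnerProductSpace ℝ E] [FiniteDimensional ℝ E]
  [MeasurableSpace E] [BorelSpace E] {f : E → ℝ}

theorem le_integral_rexp_sub_sub_mul_sq_norm (hconv : ConvexOn ℝ Set.univ f)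
    (hf : Differentiable ℝ f) {M : ℝ} (hM : 0 ≤ M)
    (hlip : ∀ x y : E, ‖∇ f x - ∇ f y‖ ≤ M * ‖x - y‖) {a b : ℝ} (hb : 0 < b)
    (hab : M / 2 + b ≤ a) (x : E) :
    (π / a) ^ (Module.finrank ℝ E / 2 : ℝ) * rexp (‖∇ f x‖ ^ 2 / (4 * a)) ≤
      ∫ y, rexp (f x - f y - b * ‖y - x‖ ^ 2) := by
  have ha : 0 < a := by linarith
  rw [← integral_add_left_eq_self (fun y => rexp (f x - f y - b * ‖y - x‖ ^ 2)) x]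
  simp only [add_sub_cancel_left]
  have hlower : ∀ u, ⟪-∇ f x, u⟫_ℝ - a * ‖u‖ ^ 2 ≤ f x - f (x + u) - b * ‖u‖ ^ 2 := by
    intro u
    have hdescent := le_add_inner_gradient_add_sq_norm hf hlip x (x + u)
    rw [add_sub_cancel_left] at hdescent
    rw [inner_neg_left]
    nlinarith [sq_nonneg ‖u‖]
  have hupper : ∀ u, f x - f (x + u) - b * ‖u‖ ^ 2 ≤ ⟪-∇ f x, u⟫_ℝ - b * ‖u‖ ^ 2 := by
    intro u
    have hsupport := hconv.add_inner_gradient_le (hf x) (x + u)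
    rw [add_sub_cancel_left] at hsupport
    rw [inner_neg_left]
    linarith
  have hint : Integrable fun u => rexp (f x - f (x + u) - b * ‖u‖ ^ 2) := by
    refine (integrable_rexp_inner_sub_mul_sq_norm hb (-∇ f x)).mono' ?_
      (ae_of_all _ fun u => ?_)
    · have := hf.continuous
      exact (continuous_exp.comp (by fun_prop)).aestronglyMeasurable
    · rw [norm_of_nonneg (exp_pos _).le]
      exact exp_le_exp.2 (hupper u)
  calc (π / a) ^ (Module.finrank ℝ E / 2 : ℝ) * rexp (‖∇ f x‖ ^ 2 / (4 * a))
      = ∫ u, rexp (⟪-∇ f x, u⟫_ℝ - a * ‖u‖ ^ 2) := by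
        rw [integral_rexp_inner_sub_mul_sq_norm ha, norm_neg]
    _ ≤ _ := integral_mono (integrable_rexp_inner_sub_mul_sq_norm ha _) hint
        fun u => exp_le_exp.2 (hlower u)

end SmoothingIntegral

theorem statement17_general {d : ℕ} (ρ : ℝ) (hρ : 0 < ρ) (f : En d → ℝ) (M : ℝ)
    (hM : 0 ≤ M) (hconv : ConvexOn ℝ Set.univ f) (hC1 : ContDiff ℝ 1 f)
    (hgradLip : ∀ θ η : En d, ‖gradient f θ - gradient f η‖ ≤ M * ‖θ - η‖) (θ : En d) :
    Real.exp (ρ ^ 2 * ‖gradient f θ‖ ^ 2 / (2 * (1 + 2 * ρ ^ 2 * M))) *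
        (2 * Real.pi * ρ ^ 2 / (1 + 2 * ρ ^ 2 * M)) ^ ((d : ℝ) / 2) ≤
      ∫ z : En d, Real.exp (f θ - f z - ‖θ - z‖ ^ 2 / (2 * ρ ^ 2)) := by
  have hb : 0 < 1 / (2 * ρ ^ 2) := by positivity
  have key := le_integral_rexp_sub_sub_mul_sq_norm hconv (hC1.differentiable one_ne_zero) hM
    hgradLip hb (a := M + 1 / (2 * ρ ^ 2)) (by linarith) θ
  rw [finrank_euclideanSpace_fin] at key
  convert key using 1
  · have hden : 0 < 1 + 2 * ρ ^ 2 * M := by positivity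
    rw [mul_comm]
    congr 2 <;> field_simp <;> ring
  · congr 1
    funext z
    rw [norm_sub_rev, one_div_mul_eq_div]

/-- Lower bound on the smoothing integral for a convex, continuously differentiable `f` with
`M`-Lipschitz gradient:
`∫ exp(f(θ) − f(z) − ‖θ−z‖²/(2ρ²)) dz ≥ exp(ρ²‖∇f(θ)‖²/(2(1+2ρ²M)))(2πρ²/(1+2ρ²M))^{d/2}`. -/
theorem statement17 {d : ℕ} (hd : 1 ≤ d) (ρ : ℝ) (hρ : 0 < ρ) (f : En d → ℝ) (M : ℝ)
    (hM : 0 ≤ M) (hconv : ConvexOn ℝ Set.univ f) (hC1 : ContDiff ℝ 1 f)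
    (hgradLip : ∀ θ η : En d, ‖gradient f θ - gradient f η‖ ≤ M * ‖θ - η‖) (θ : En d) :
    Real.exp (ρ ^ 2 * ‖gradient f θ‖ ^ 2 / (2 * (1 + 2 * ρ ^ 2 * M))) *
        (2 * Real.pi * ρ ^ 2 / (1 + 2 * ρ ^ 2 * M)) ^ ((d : ℝ) / 2) ≤
      ∫ z : En d, Real.exp (f θ - f z - ‖θ - z‖ ^ 2 / (2 * ρ ^ 2)) :=
  statement17_general ρ hρ f M hM hconv hC1 hgradLip θ
end
end
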